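/- arXiv:2010.09527 — 3 statements merged into one kernel-verified Lean document; each statement's English description precedes it below -/
import Mathlib

section
/- For a real number p ≥ 0, there exists a natural number k ≥ 1 such that k · p > 2 and j · p < 3 for all natural numbers 1 ≤ j ≤ k, if and only if p ∈ (0,1) ∪ (1, 3/2) ∪ (2, 3). (This is the reachability-synthesis result EFsynth(A, {ℓ2}) for the example PTA.) -/
theorem stmt2 (p : ℝ) (hp : 0 ≤ p) :
    (∃ k : ℕ, 1 ≤ k ∧ (k : ℝ) * p > 2 ∧ ∀ j : ℕ, 1 ≤ j → j ≤ k → (j : ℝ) * p < 3) ↔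
      (0 < p ∧ p < 1) ∨ (1 < p ∧ p < 3/2) ∨ (2 < p ∧ p < 3) := by
  constructor
  · rintro ⟨k, hk1, hk2, hk3⟩
    have hkn : (0:ℝ) ≤ (k:ℝ) := Nat.cast_nonneg k
    have hp0 : 0 < p := by
      by_contra h
      push_neg at h
      nlinarith
    have h3 : p < 3 := by
      have := hk3 1 le_rfl hk1
      simpa using this
    rcases lt_trichotomy p 1 with h|h|h
    · exact Or.inl ⟨hp0, h⟩
    · exfalso
      subst h
      have hk2' : (2:ℝ) < (k:ℝ) := by simpa using hk2
      have : 2 < k := by exact_mod_cast hk2'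
      have h3k : 3 ≤ k := by omega
      have := hk3 3 (by norm_num) h3k
      norm_num at this
    · rcases lt_or_ge p (3/2) with h2|h2
      · exact Or.inr (Or.inl ⟨h, h2⟩)
      · rcases le_or_gt p 2 with h4|h4
        · exfalso
          have hk2k : 2 ≤ k := by
            rcases Nat.lt_or_ge k 2 with hk|hk
            · interval_cases k
              · push_cast at hk2; linarith
            · exact hk
          have := hk3 2 (by norm_num) hk2k
          push_cast at this
          linarith
        · exact Or.inr (Or.inr ⟨h4, h3⟩)
  · rintro (⟨h0, h1⟩|⟨h0, h1⟩|⟨h0, h1⟩)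
    · refine ⟨⌊2/p⌋₊ + 1, by omega, ?_, ?_⟩
      · have hlt : 2/p < (⌊2/p⌋₊ : ℝ) + 1 := Nat.lt_floor_add_one _
        have : 2/p < ((⌊2/p⌋₊ + 1 : ℕ) : ℝ) := by push_cast; linarith
        calc (2:ℝ) = (2/p) * p := by field_simp
        _ < ((⌊2/p⌋₊ + 1 : ℕ) : ℝ) * p := by
            exact mul_lt_mul_of_pos_right this h0
      · intro j hj1 hj2
        have hfl : (⌊2/p⌋₊ : ℝ) ≤ 2/p := Nat.floor_le (by positivity)
        have hjk : (j:ℝ) ≤ ((⌊2/p⌋₊ + 1 : ℕ) : ℝ) := by exact_mod_cast hj2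
        have h1' : (j:ℝ) * p ≤ ((⌊2/p⌋₊ + 1 : ℕ) : ℝ) * p :=
          mul_le_mul_of_nonneg_right hjk hp
        have h2' : ((⌊2/p⌋₊ + 1 : ℕ) : ℝ) * p ≤ 2 + p := by
          push_cast
          have : (⌊2/p⌋₊ : ℝ) * p ≤ (2/p) * p := mul_le_mul_of_nonneg_right hfl hp
          rw [div_mul_cancel₀] at this
          · linarith
          · exact ne_of_gt h0
        linarith
    · refine ⟨2, by norm_num, by push_cast; linarith, ?_⟩
      intro j hj1 hj2
      interval_cases j <;> push_cast <;> linarith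
    · refine ⟨1, le_rfl, by push_cast; linarith, ?_⟩
      intro j hj1 hj2
      interval_cases j
      push_cast; linarith
end

section
/- For a real number p ≥ 0, there is NO natural number k ≥ 1 with k · p > 2 and j · p < 3 for all 1 ≤ j ≤ k, if and only if p = 0 or p = 1 or 3/2 ≤ p ≤ 2 or p ≥ 3. (This is the safety-synthesis result ¬EFsynth(A, {ℓ2}).) -/
theorem stmt3 (p : ℝ) (hp : 0 ≤ p) :
    (¬ ∃ k : ℕ, 1 ≤ k ∧ (k : ℝ) * p > 2 ∧ ∀ j : ℕ, 1 ≤ j → j ≤ k → (j : ℝ) * p < 3) ↔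
      p = 0 ∨ p = 1 ∨ (3/2 ≤ p ∧ p ≤ 2) ∨ p ≥ 3 := by
  constructor
  · intro h
    by_contra hcon
    push_neg at hcon
    obtain ⟨h0, h1, h32, h3⟩ := hcon
    have hp0 : 0 < p := lt_of_le_of_ne hp (Ne.symm h0)
    apply h
    rcases lt_or_ge p (3/2) with hlt | hge
    · rcases lt_or_gt_of_ne h1 with hp1 | hp1
      · -- 0 < p < 1
        refine ⟨⌊2/p⌋₊ + 1, by omega, ?_, ?_⟩
        · have h2 : 2/p < (⌊2/p⌋₊ + 1 : ℝ) := Nat.lt_floor_add_one _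
          have := (div_lt_iff₀ hp0).mp h2
          push_cast
          linarith
        · intro j hj1 hj2
          have hfl : (⌊2/p⌋₊ : ℝ) ≤ 2/p := Nat.floor_le (by positivity)
          have hjk : (j : ℝ) ≤ (⌊2/p⌋₊ + 1 : ℝ) := by exact_mod_cast hj2
          have hkp : ((⌊2/p⌋₊ : ℝ) + 1) * p ≤ (2/p + 1) * p := by nlinarith
          have h2p : (2/p) * p = 2 := div_mul_cancel₀ 2 (ne_of_gt hp0)
          have : (j : ℝ) * p ≤ ((⌊2/p⌋₊ : ℝ) + 1) * p := by nlinarith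
          nlinarith
      · -- 1 < p < 3/2
        refine ⟨2, by norm_num, by push_cast; nlinarith, ?_⟩
        intro j hj1 hj2
        interval_cases j <;> push_cast <;> nlinarith
    · -- p ≥ 3/2, so p > 2
      have hp2 : 2 < p := by
        by_contra hh; push_neg at hh; exact absurd (h32 hge) (by linarith)
      refine ⟨1, le_rfl, by push_cast; linarith, ?_⟩
      intro j hj1 hj2
      interval_cases j
      push_cast; linarith
  · rintro (rfl | rfl | ⟨ha, hb⟩ | hge) ⟨k, hk1, hk2, hk3⟩
    · simp at hk2; linarith
    · have hk3' : 3 ≤ k := by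
        by_contra hh; push_neg at hh; interval_cases k <;> norm_num at hk2
      have := hk3 3 (by norm_num) hk3'
      norm_num at this
    · have hk2' : 2 ≤ k := by
        by_contra hh; push_neg at hh; interval_cases k <;> push_cast at hk2 <;> linarith
      have := hk3 2 (by norm_num) hk2'
      push_cast at this; linarith
    · have := hk3 1 le_rfl hk1
      push_cast at this; linarith
end

section
/- Let p, n be nonnegative reals. There is no natural number k ≥ 1 with k · p > 2, j · p < 3 for all 1 ≤ j ≤ k, and (k ≥ 2 → p ≥ n), if and only if one of the following holds: (0 < p < 1 and n > p), or p = 1, or (1 < p < 3/2 and n > p), or 3/2 ≤ p ≤ 2, or p ≥ 3, or p = 0. (This is the synthesized n-location-non-interference constraint for the example PTA.) -/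
theorem stmt7 (p n : ℝ) (hp : 0 ≤ p) (hn : 0 ≤ n) :
    (¬ ∃ k : ℕ, 1 ≤ k ∧ (k : ℝ) * p > 2 ∧
        (∀ j : ℕ, 1 ≤ j → j ≤ k → (j : ℝ) * p < 3) ∧ (2 ≤ k → p ≥ n)) ↔
      ((0 < p ∧ p < 1 ∧ n > p) ∨ p = 1 ∨ (1 < p ∧ p < 3/2 ∧ n > p) ∨
        (3/2 ≤ p ∧ p ≤ 2) ∨ p ≥ 3 ∨ p = 0) := by
  constructor
  · intro h
    by_contra hR
    push_neg at hR
    obtain ⟨h1, h2, h3, h4, h5, h6⟩ := hR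
    have hp0 : 0 < p := lt_of_le_of_ne hp (Ne.symm h6)
    have hp3 : p < 3 := h5
    rcases lt_or_ge 2 p with hgt2 | hle2
    · -- 2 < p < 3 : witness k = 1
      exact h ⟨1, le_refl 1, by push_cast; linarith,
        fun j hj1 hjk => by
          have : j = 1 := le_antisymm hjk hj1
          subst this; push_cast; linarith,
        fun hh => absurd hh (by norm_num)⟩
    · have hlt32 : p < 3/2 := by
        by_contra hge
        push_neg at hge
        exact absurd (h4 hge) (not_lt.mpr hle2)
      rcases lt_or_ge 1 p with hgt1 | hle1
      · -- 1 < p < 3/2 : witness k = 2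
        have hnp : n ≤ p := h3 hgt1 hlt32
        exact h ⟨2, by norm_num, by push_cast; linarith,
          fun j hj1 hjk => by
            interval_cases j <;> push_cast <;> linarith,
          fun _ => hnp⟩
      · -- 0 < p < 1 : witness k = ⌊2/p⌋ + 1
        have hlt1 : p < 1 := lt_of_le_of_ne hle1 h2
        have hnp : n ≤ p := h1 hp0 hlt1
        have hfl : (Nat.floor (2/p) : ℝ) ≤ 2/p := Nat.floor_le (by positivity)
        have hflgt : (2:ℝ)/p < (Nat.floor (2/p) : ℝ) + 1 := Nat.lt_floor_add_one _
        have hkp3 : ((Nat.floor (2/p) + 1 : ℕ) : ℝ) * p < 3 := by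
          push_cast
          have h1' : (Nat.floor (2/p) : ℝ) * p ≤ (2/p) * p :=
            mul_le_mul_of_nonneg_right hfl hp
          have h2' : (2/p) * p = 2 := div_mul_cancel₀ 2 (ne_of_gt hp0)
          nlinarith
        have hkp2 : ((Nat.floor (2/p) + 1 : ℕ) : ℝ) * p > 2 := by
          push_cast
          have := (div_lt_iff₀ hp0).mp hflgt
          linarith
        have hk2 : 2 ≤ Nat.floor (2/p) + 1 := by
          have : (2:ℝ) ≤ 2/p := by
            rw [le_div_iff₀ hp0]; linarith
          have := Nat.le_floor (α := ℝ) (n := 2) (by exact_mod_cast this)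
          omega
        exact h ⟨Nat.floor (2/p) + 1, by omega, hkp2,
          fun j hj1 hjk =>
            lt_of_le_of_lt (mul_le_mul_of_nonneg_right (Nat.cast_le.mpr hjk) hp) hkp3,
          fun _ => hnp⟩
  · rintro hR ⟨k, hk1, hk2, hk3, hk4⟩
    have hkk : (k:ℝ) * p < 3 := hk3 k hk1 le_rfl
    have h1p : (1:ℝ) * p < 3 := by
      have := hk3 1 le_rfl hk1; push_cast at this ⊢; linarith
    rcases hR with ⟨hp0, hp1, hnp⟩ | hp1 | ⟨hp1, hp32, hnp⟩ | ⟨hp32, hp2⟩ | hp3 | hp0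
    · -- 0 < p < 1, n > p
      have hk2' : 2 ≤ k := by
        by_contra hlt
        push_neg at hlt
        interval_cases k
        · push_cast at hk2; linarith
      have := hk4 hk2'; linarith
    · -- p = 1
      subst hp1
      have ha : (2:ℝ) < k := by linarith [hk2]
      have hb : (k:ℝ) < 3 := by linarith [hkk]
      have ha' : 2 < k := by exact_mod_cast ha
      have hb' : k < 3 := by exact_mod_cast hb
      omega
    · -- 1 < p < 3/2, n > p
      have hk2' : 2 ≤ k := by
        by_contra hlt
        push_neg at hlt
        interval_cases k
        · push_cast at hk2; linarith
      have := hk4 hk2'; linarith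
    · -- 3/2 ≤ p ≤ 2
      rcases Nat.lt_or_ge k 2 with hlt | hge
      · interval_cases k
        · push_cast at hk2; linarith
      · have := hk3 2 (by norm_num) hge
        push_cast at this; linarith
    · linarith
    · subst hp0; simp at hk2; linarith
end
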